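/- arXiv:1509.07127 — 2 statements merged into one kernel-verified Lean document; each statement's English description precedes it below -/
import Mathlib

section
/- Trace norm contraction under projections: For a finite-dimensional Hilbert space, a density operator ω, and a projection Π, ‖Π ω Π − ω‖₁ ≤ 2√(1 − tr(Π ω)). -/
open scoped ENNReal Kronecker ComplexOrder
open Matrix MeasureTheory

/-- Apply a real function to a Hermitian matrix via the spectral decomposition
(junk value `0` if the matrix is not Hermitian). -/
noncomputable def mfun {n : Type*} [Fintype n] [DecidableEq n] (f : ℝ → ℂ)
    (M : Matrix n n ℂ) : Matrix n n ℂ :=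
  if h : M.IsHermitian then
    (h.eigenvectorUnitary : Matrix n n ℂ) *
      Matrix.diagonal (fun i => f (h.eigenvalues i)) *
      (star (h.eigenvectorUnitary : Matrix n n ℂ))
  else 0

/-- Matrix square root of a positive semidefinite matrix. -/
noncomputable def msqrt {n : Type*} [Fintype n] [DecidableEq n] (M : Matrix n n ℂ) :
    Matrix n n ℂ :=
  mfun (fun x => (Real.sqrt x : ℂ)) M

/-- Inverse square root, taken on the support. -/
noncomputable def minvsqrt {n : Type*} [Fintype n] [DecidableEq n] (M : Matrix n n ℂ) :
    Matrix n n ℂ :=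
  mfun (fun x : ℝ => if x ≤ 0 then (0:ℂ) else ((Real.sqrt x)⁻¹ : ℂ)) M

/-- Matrix logarithm (with `log 0 = 0` convention on the kernel). -/
noncomputable def mlog {n : Type*} [Fintype n] [DecidableEq n] (M : Matrix n n ℂ) :
    Matrix n n ℂ :=
  mfun (fun x => (Real.log x : ℂ)) M

/-- Complex power `M ^ z` of a positive semidefinite matrix, taken on the support. -/
noncomputable def mcpow {n : Type*} [Fintype n] [DecidableEq n] (z : ℂ)
    (M : Matrix n n ℂ) : Matrix n n ℂ :=
  mfun (fun x : ℝ => if x ≤ 0 then (0:ℂ) else (x : ℂ) ^ z) M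

/-- Projection onto the support of a positive semidefinite matrix. -/
noncomputable def suppProj {n : Type*} [Fintype n] [DecidableEq n] (M : Matrix n n ℂ) :
    Matrix n n ℂ :=
  mfun (fun x : ℝ => if x ≤ 0 then (0:ℂ) else 1) M

/-- Singular values of a (rectangular) complex matrix. -/
noncomputable def singVals {m n : Type*} [Fintype m] [Fintype n] [DecidableEq n]
    (L : Matrix m n ℂ) : n → ℝ :=
  fun i => Real.sqrt ((Matrix.posSemidef_conjTranspose_mul_self L).1.eigenvalues i)

/-- Trace norm (Schatten 1-norm). -/
noncomputable def trNorm {m n : Type*} [Fintype m] [Fintype n] [DecidableEq n]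
    (L : Matrix m n ℂ) : ℝ :=
  ∑ i, singVals L i

/-- Schatten `p`-norm, `p ∈ [1,∞]`. -/
noncomputable def schatten {m n : Type*} [Fintype m] [Fintype n] [DecidableEq n]
    (p : ℝ≥0∞) (L : Matrix m n ℂ) : ℝ :=
  if p = ∞ then ⨆ i, singVals L i
  else (∑ i, singVals L i ^ p.toReal) ^ (1 / p.toReal)

/-- Operator norm (largest singular value). -/
noncomputable def opNorm {m n : Type*} [Fintype m] [Fintype n] [DecidableEq n]
    (L : Matrix m n ℂ) : ℝ :=
  ⨆ i, singVals L i

/-- Quantum relative entropy `D(ρ‖σ) = tr(ρ (log ρ - log σ))`. -/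
noncomputable def relEnt {n : Type*} [Fintype n] [DecidableEq n]
    (ρ σ : Matrix n n ℂ) : ℝ :=
  ((ρ * (mlog ρ - mlog σ)).trace).re

/-- Von Neumann entropy. -/
noncomputable def vnEnt {n : Type*} [Fintype n] [DecidableEq n]
    (ρ : Matrix n n ℂ) : ℝ :=
  -((ρ * mlog ρ).trace).re

/-- Fidelity `F(ρ,σ) = ‖√ρ √σ‖₁`. -/
noncomputable def fid {n : Type*} [Fintype n] [DecidableEq n]
    (ρ σ : Matrix n n ℂ) : ℝ :=
  trNorm (msqrt ρ * msqrt σ)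

/-- `supp ρ ⊆ supp σ`, expressed via kernels (for PSD matrices). -/
def suppLE {n : Type*} [Fintype n] (ρ σ : Matrix n n ℂ) : Prop :=
  ∀ v, σ.mulVec v = 0 → ρ.mulVec v = 0

/-- Trace-preserving linear map. -/
def IsTP {m n : Type*} [Fintype m] [Fintype n]
    (Φ : Matrix m m ℂ →ₗ[ℂ] Matrix n n ℂ) : Prop :=
  ∀ M, (Φ M).trace = M.trace

/-- Completely positive map, via the Kraus representation. -/
def IsCP {m n : Type*} [Fintype m] [Fintype n]
    (Φ : Matrix m m ℂ →ₗ[ℂ] Matrix n n ℂ) : Prop :=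
  ∃ (k : ℕ) (K : Fin k → Matrix n m ℂ), ∀ M, Φ M = ∑ i, K i * M * (K i)ᴴ

/-- `Φdag` is the adjoint of `Φ` w.r.t. the Hilbert–Schmidt inner product. -/
def IsAdjointPair {m n : Type*} [Fintype m] [Fintype n]
    (Φ : Matrix m m ℂ →ₗ[ℂ] Matrix n n ℂ)
    (Φdag : Matrix n n ℂ →ₗ[ℂ] Matrix m m ℂ) : Prop :=
  ∀ X Y, ((Xᴴ * Φ Y).trace) = (((Φdag X)ᴴ * Y).trace)

/-- Petz recovery map `P_{σ,N}` where `τ = N(σ)` and `Φdag = N†`. -/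
noncomputable def petz {m n : Type*} [Fintype m] [DecidableEq m] [Fintype n] [DecidableEq n]
    (σ : Matrix m m ℂ) (τ : Matrix n n ℂ)
    (Φdag : Matrix n n ℂ →ₗ[ℂ] Matrix m m ℂ) (X : Matrix n n ℂ) : Matrix m m ℂ :=
  msqrt σ * Φdag (minvsqrt τ * X * minvsqrt τ) * msqrt σ

/-- Rotated Petz recovery map `R^t_{σ,N}`. -/
noncomputable def rotPetz {m n : Type*} [Fintype m] [DecidableEq m] [Fintype n] [DecidableEq n]
    (t : ℝ) (σ : Matrix m m ℂ) (τ : Matrix n n ℂ)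
    (Φdag : Matrix n n ℂ →ₗ[ℂ] Matrix m m ℂ) (X : Matrix n n ℂ) : Matrix m m ℂ :=
  mcpow (-(Complex.I * t)) σ *
    petz σ τ Φdag (mcpow (Complex.I * t) τ * X * mcpow (-(Complex.I * t)) τ) *
    mcpow (Complex.I * t) σ

/-- Partial trace over the second (environment) factor. -/
noncomputable def ptraceE {b e : Type*} [Fintype e]
    (M : Matrix (b × e) (b × e) ℂ) : Matrix b b ℂ :=
  fun i j => ∑ k : e, M (i, k) (j, k)

/-- The density `β₀(t) = (π/2) (cosh(π t) + 1)⁻¹`. -/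
noncomputable def beta0 (t : ℝ) : ℝ :=
  Real.pi / 2 * (Real.cosh (Real.pi * t) + 1)⁻¹

/-!
Write `ω = X Xᴴ` and `A = PωP - ω = -((1 - P)ω + Pω(1 - P))`. The sign `W = sign A` is a
Hermitian contraction with `tr (W A) = ‖A‖₁`, and cyclicity turns `tr (W (1 - P) ω)` and
`tr (W P ω (1 - P))` into Hilbert–Schmidt inner products, each pairing `(1 - P) X`, of Frobenius
norm `√tr ((1 - P) ω)`, with `X` acted on by contractions, of Frobenius norm at most
`‖X‖ = √tr ω`. Cauchy–Schwarz bounds each of them by `√tr ω · √tr ((1 - P) ω)`.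
-/

open Unitary
open scoped Matrix.Norms.Frobenius

section Spectral

variable {m : Type*} [Fintype m] [DecidableEq m] {A : Matrix m m ℂ}

lemma mfun_of_isHermitian (hA : A.IsHermitian) (f : ℝ → ℂ) :
    mfun f A = conjStarAlgAut ℂ _ hA.eigenvectorUnitary (diagonal (f ∘ hA.eigenvalues)) :=
  dif_pos hA

lemma mfun_of_not_isHermitian (hA : ¬A.IsHermitian) (f : ℝ → ℂ) : mfun f A = 0 :=
  dif_neg hA

lemma mfun_mul_mfun (f g : ℝ → ℂ) (A : Matrix m m ℂ) :
    mfun f A * mfun g A = mfun (f * g) A := by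
  by_cases hA : A.IsHermitian
  · simp only [mfun_of_isHermitian hA, ← map_mul, diagonal_mul_diagonal]
    rfl
  · simp [mfun_of_not_isHermitian hA]

lemma mfun_sub (f g : ℝ → ℂ) (A : Matrix m m ℂ) : mfun (f - g) A = mfun f A - mfun g A := by
  by_cases hA : A.IsHermitian
  · simp only [mfun_of_isHermitian hA, ← map_sub, diagonal_sub]
    rfl
  · simp [mfun_of_not_isHermitian hA]

lemma conjTranspose_mfun (f : ℝ → ℂ) (A : Matrix m m ℂ) :
    (mfun f A)ᴴ = mfun (star f) A := by
  by_cases hA : A.IsHermitian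
  · rw [mfun_of_isHermitian hA, mfun_of_isHermitian hA, ← star_eq_conjTranspose, ← map_star,
      star_eq_conjTranspose, diagonal_conjTranspose]
    rfl
  · simp [mfun_of_not_isHermitian hA]

lemma mfun_one (hA : A.IsHermitian) : mfun 1 A = 1 := by
  rw [mfun_of_isHermitian hA, ← map_one (conjStarAlgAut ℂ _ hA.eigenvectorUnitary)]
  rfl

lemma mfun_ofReal (hA : A.IsHermitian) : mfun (↑) A = A :=
  (mfun_of_isHermitian hA _).trans hA.spectral_theorem.symm

lemma trace_mfun (hA : A.IsHermitian) (f : ℝ → ℂ) :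
    (mfun f A).trace = ∑ i, f (hA.eigenvalues i) := by
  rw [mfun_of_isHermitian hA, conjStarAlgAut_apply, trace_mul_cycle, coe_star_mul_self,
    Matrix.one_mul, trace_diagonal]
  rfl

lemma posSemidef_mfun {f : ℝ → ℂ} (hf : ∀ x, 0 ≤ f x) (A : Matrix m m ℂ) :
    (mfun f A).PosSemidef := by
  by_cases hA : A.IsHermitian
  · rw [mfun_of_isHermitian hA, conjStarAlgAut_apply, star_eq_conjTranspose]
    exact (posSemidef_diagonal_iff.mpr fun i => hf _).mul_mul_conjTranspose_same _
  · simpa [mfun_of_not_isHermitian hA] using PosSemidef.zero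

open Polynomial in
lemma Matrix.IsHermitian.map_eigenvalues_eq {B : Matrix m m ℂ} (hB : B.IsHermitian)
    (U : unitary (Matrix m m ℂ)) (d : m → ℝ)
    (hBd : B = conjStarAlgAut ℂ _ U (diagonal (Complex.ofReal ∘ d))) :
    Finset.univ.val.map hB.eigenvalues = Finset.univ.val.map d := by
  have hcharpoly : B.charpoly = ∏ i, (X - C (d i : ℂ)) := by
    rw [hBd, conjStarAlgAut_apply, charpoly_mul_comm, ← Matrix.mul_assoc, coe_star_mul_self,
      Matrix.one_mul, charpoly_diagonal]
    rfl
  have hroots := congrArg (Multiset.map Complex.re) hB.roots_charpoly_eq_eigenvalues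
  rw [hcharpoly, roots_prod _ _ (by simp [Finset.prod_ne_zero_iff, X_sub_C_ne_zero])] at hroots
  simpa [Multiset.map_map] using hroots.symm

lemma Matrix.IsHermitian.sum_comp_eigenvalues_eq {B : Matrix m m ℂ} (hB : B.IsHermitian)
    (U : unitary (Matrix m m ℂ)) (d : m → ℝ)
    (hBd : B = conjStarAlgAut ℂ _ U (diagonal (Complex.ofReal ∘ d))) (g : ℝ → ℝ) :
    ∑ i, g (hB.eigenvalues i) = ∑ i, g (d i) := by
  simpa [Multiset.map_map] using congrArg (fun s => (s.map g).sum) (hB.map_eigenvalues_eq U d hBd)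

lemma trNorm_eq_sum_abs_eigenvalues (hA : A.IsHermitian) :
    trNorm A = ∑ i, |hA.eigenvalues i| := by
  have hsq : Aᴴ * A = conjStarAlgAut ℂ _ hA.eigenvectorUnitary
      (diagonal (Complex.ofReal ∘ fun i => hA.eigenvalues i ^ 2)) := by
    calc Aᴴ * A = mfun (↑) A * mfun (↑) A := by rw [hA.eq, mfun_ofReal hA]
      _ = _ := by
        rw [mfun_mul_mfun, mfun_of_isHermitian hA]
        congr 2; ext; simp [sq]
  simp only [trNorm, singVals]
  rw [(posSemidef_conjTranspose_mul_self A).1.sum_comp_eigenvalues_eq _ _ hsq Real.sqrt]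
  exact Finset.sum_congr rfl fun i _ => Real.sqrt_sq_eq_abs _

lemma Matrix.IsHermitian.exists_trace_mul_eq_trNorm (hA : A.IsHermitian) :
    ∃ W : Matrix m m ℂ, W.IsHermitian ∧ (1 - Wᴴ * W).PosSemidef ∧
      (W * A).trace = trNorm A := by
  have hsign : star (fun x : ℝ => ((SignType.sign x : ℝ) : ℂ)) =
      fun x => ((SignType.sign x : ℝ) : ℂ) := by
    ext; simp
  refine ⟨mfun (fun x : ℝ => ((SignType.sign x : ℝ) : ℂ)) A, ?_, ?_, ?_⟩
  · rw [IsHermitian, conjTranspose_mfun, hsign]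
  · rw [conjTranspose_mfun, hsign, mfun_mul_mfun, ← mfun_one hA, ← mfun_sub]
    refine posSemidef_mfun (fun x => ?_) A
    rcases lt_trichotomy x 0 with h | h | h <;> simp [h]
  · nth_rw 2 [← mfun_ofReal hA]
    rw [mfun_mul_mfun, trace_mfun hA, trNorm_eq_sum_abs_eigenvalues hA]
    push_cast
    simp [← Complex.ofReal_mul, sign_mul_self]

end Spectral

section Frobenius

variable {m n : Type*} [Fintype m] [Fintype n]

lemma Matrix.trace_conjTranspose_mul_eq_inner (X Y : Matrix m n ℂ) :
    (Xᴴ * Y).trace = inner ℂ (WithLp.toLp 2 fun i => WithLp.toLp 2 (X i))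
      (WithLp.toLp 2 fun i => WithLp.toLp 2 (Y i)) := by
  simp [trace, mul_apply, PiLp.inner_apply, Finset.sum_comm (γ := m), mul_comm]

lemma Matrix.norm_trace_conjTranspose_mul_le (X Y : Matrix m n ℂ) :
    ‖(Xᴴ * Y).trace‖ ≤ ‖X‖ * ‖Y‖ := by
  rw [trace_conjTranspose_mul_eq_inner]
  exact norm_inner_le_norm _ _

lemma Matrix.frobenius_norm_sq_eq_re_trace (X : Matrix m n ℂ) :
    ‖X‖ ^ 2 = ((Xᴴ * X).trace).re := by
  rw [trace_conjTranspose_mul_eq_inner, inner_self_eq_norm_sq_to_K]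
  norm_cast

lemma Matrix.frobenius_norm_mul_le_of_posSemidef_one_sub [DecidableEq m] {W : Matrix m m ℂ}
    (hW : (1 - Wᴴ * W).PosSemidef) (X : Matrix m n ℂ) : ‖W * X‖ ≤ ‖X‖ := by
  have h := (hW.conjTranspose_mul_mul_same X).trace_nonneg
  rw [Matrix.mul_sub, Matrix.sub_mul, trace_sub, Matrix.mul_one, sub_nonneg] at h
  refine (pow_le_pow_iff_left₀ (norm_nonneg _) (norm_nonneg _) two_ne_zero).mp ?_
  rw [frobenius_norm_sq_eq_re_trace, frobenius_norm_sq_eq_re_trace, conjTranspose_mul]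
  simpa only [Matrix.mul_assoc] using (Complex.le_def.mp h).1

lemma IsStarProjection.conjTranspose_mul_self {P : Matrix m m ℂ} (hP : IsStarProjection P) :
    Pᴴ * P = P := by
  rw [← star_eq_conjTranspose, hP.isSelfAdjoint.star_eq, hP.isIdempotentElem.eq]

lemma IsStarProjection.frobenius_norm_mul_eq_sqrt {P : Matrix m m ℂ} (hP : IsStarProjection P)
    (X : Matrix m n ℂ) : ‖P * X‖ = √(P * (X * Xᴴ)).trace.re := by
  rw [← Real.sqrt_sq (norm_nonneg _), frobenius_norm_sq_eq_re_trace, conjTranspose_mul,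
    Matrix.mul_assoc, trace_mul_comm, ← Matrix.mul_assoc Pᴴ, hP.conjTranspose_mul_self,
    Matrix.mul_assoc]

end Frobenius

section Projection

variable {m k : Type*} [Fintype m] [DecidableEq m] [Fintype k] {P : Matrix m m ℂ}

lemma IsStarProjection.posSemidef_one_sub_conjTranspose_mul_self (hP : IsStarProjection P) :
    (1 - Pᴴ * P).PosSemidef := by
  rw [hP.conjTranspose_mul_self, ← hP.one_sub.conjTranspose_mul_self]
  exact posSemidef_conjTranspose_mul_self _

lemma trace_mul_proj_mul_mul_proj_sub (hP : IsStarProjection P) {W : Matrix m m ℂ}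
    (hW : W.IsHermitian) (X : Matrix m k ℂ) :
    (W * (P * (X * Xᴴ) * P - X * Xᴴ)).trace =
      -(((W * X)ᴴ * ((1 - P) * X)).trace + (((1 - P) * X)ᴴ * (W * (P * X))).trace) := by
  have h₁ : ((W * X)ᴴ * ((1 - P) * X)).trace = (W * ((1 - P) * (X * Xᴴ))).trace := by
    rw [conjTranspose_mul, hW.eq, Matrix.mul_assoc, trace_mul_comm]
    simp only [Matrix.mul_assoc]
  have h₂ : (((1 - P) * X)ᴴ * (W * (P * X))).trace =
      (W * (P * (X * Xᴴ) * (1 - P))).trace := by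
    rw [conjTranspose_mul, ← star_eq_conjTranspose (1 - P), hP.one_sub.isSelfAdjoint.star_eq,
      trace_mul_comm]
    simp only [Matrix.mul_assoc]
  rw [h₁, h₂, ← trace_add, ← trace_neg]
  congr 1
  noncomm_ring

lemma trNorm_proj_mul_mul_proj_sub_le_frobenius (hP : IsStarProjection P) (X : Matrix m k ℂ) :
    trNorm (P * (X * Xᴴ) * P - X * Xᴴ) ≤ 2 * ‖X‖ * ‖(1 - P) * X‖ := by
  have hA : (P * (X * Xᴴ) * P - X * Xᴴ).IsHermitian := by
    simp only [IsHermitian, conjTranspose_sub, conjTranspose_mul, conjTranspose_conjTranspose,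
      ← star_eq_conjTranspose P, hP.isSelfAdjoint.star_eq, Matrix.mul_assoc]
  obtain ⟨W, hW, hWc, hWA⟩ := hA.exists_trace_mul_eq_trNorm
  have hWX := frobenius_norm_mul_le_of_posSemidef_one_sub hWc X
  have hWPX := (frobenius_norm_mul_le_of_posSemidef_one_sub hWc (P * X)).trans
    (frobenius_norm_mul_le_of_posSemidef_one_sub hP.posSemidef_one_sub_conjTranspose_mul_self X)
  calc trNorm (P * (X * Xᴴ) * P - X * Xᴴ)
      = (W * (P * (X * Xᴴ) * P - X * Xᴴ)).trace.re := by rw [hWA, Complex.ofReal_re]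
    _ ≤ ‖(W * (P * (X * Xᴴ) * P - X * Xᴴ)).trace‖ := Complex.re_le_norm _
    _ ≤ ‖W * X‖ * ‖(1 - P) * X‖ + ‖(1 - P) * X‖ * ‖W * (P * X)‖ := by
        rw [trace_mul_proj_mul_mul_proj_sub hP hW, norm_neg]
        exact (norm_add_le _ _).trans (add_le_add (norm_trace_conjTranspose_mul_le _ _)
          (norm_trace_conjTranspose_mul_le _ _))
    _ ≤ ‖X‖ * ‖(1 - P) * X‖ + ‖(1 - P) * X‖ * ‖X‖ := by gcongr
    _ = 2 * ‖X‖ * ‖(1 - P) * X‖ := by ring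

theorem trNorm_proj_mul_mul_proj_sub_le (hP : IsStarProjection P) {ω : Matrix m m ℂ}
    (hω : ω.PosSemidef) :
    trNorm (P * ω * P - ω) ≤ 2 * √ω.trace.re * √((1 - P) * ω).trace.re := by
  obtain ⟨X, rfl⟩ : ∃ X : Matrix m m ℂ, ω = X * Xᴴ := by
    open scoped MatrixOrder in
    obtain ⟨B, rfl⟩ := CStarAlgebra.nonneg_iff_eq_star_mul_self.mp hω.nonneg
    exact ⟨Bᴴ, by rw [conjTranspose_conjTranspose, star_eq_conjTranspose]⟩
  have hX := (IsStarProjection.one (R := Matrix m m ℂ)).frobenius_norm_mul_eq_sqrt X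
  rw [Matrix.one_mul, Matrix.one_mul] at hX
  rw [← hX, ← hP.one_sub.frobenius_norm_mul_eq_sqrt]
  exact trNorm_proj_mul_mul_proj_sub_le_frobenius hP X

end Projection

/-- Trace-norm contraction under projections:
`‖ΠωΠ − ω‖₁ ≤ 2√(1 − tr(Πω))`. -/
theorem trNorm_proj_sandwich {n : ℕ}
    (P : Matrix (Fin n) (Fin n) ℂ) (hPidem : P * P = P) (hPherm : Pᴴ = P)
    (ω : Matrix (Fin n) (Fin n) ℂ) (hω : ω.PosSemidef) (hω1 : ω.trace = 1) :
    trNorm (P * ω * P - ω) ≤ 2 * Real.sqrt (1 - ((P * ω).trace).re) := by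
  calc trNorm (P * ω * P - ω)
      ≤ 2 * √ω.trace.re * √((1 - P) * ω).trace.re :=
        trNorm_proj_mul_mul_proj_sub_le ⟨hPidem, hPherm⟩ hω
    _ = 2 * √(1 - (P * ω).trace.re) := by
        rw [Matrix.sub_mul, Matrix.one_mul, trace_sub, hω1]
        simp
end

section
/- Cauchy–Schwarz / Powers–Størmer estimate used for continuity: For positive semi-definite trace-class operators σ, σ' on a Hilbert space and bounded operators a₁, a₂, |tr(a₂ σ'^{1/2} a₁ (σ'^{1/2} − σ^{1/2}))| ≤ ‖a₂‖_∞ ‖a₁‖_∞ ‖σ'‖₁^{1/2} ‖σ' − σ‖₁^{1/2}. -/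
/-!
Put `X = a₂ σ'^{1/2}` and `Y = a₁ (σ'^{1/2} - σ^{1/2})`. Cauchy–Schwarz for the Hilbert–Schmidt
product gives `|tr (X Y)| ≤ ‖X‖₂ ‖Y‖₂`, and `‖a B‖₂ ≤ ‖a‖_∞ ‖B‖₂` because `aᴴ a ≤ ‖a‖_∞² • 1` in
the Loewner order. Then `‖σ'^{1/2}‖₂² = tr σ' = ‖σ'‖₁`, and `‖σ'^{1/2} - σ^{1/2}‖₂² ≤ ‖σ' - σ‖₁` is
the Powers–Størmer inequality. For the latter, with `A, B ≥ 0`, `C = B - A`, `D = B + A` and `S`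
the unitary sign of `C`, the identity `2 (B² - A²) = C D + D C` gives
`tr (S (B² - A²)) = tr (D |C|)`; this is at most `‖B² - A²‖₁` since `S` is unitary, and at least
`tr C²` since `D ± C ≥ 0`.
-/

open scoped ENNReal Kronecker ComplexOrder
open Matrix MeasureTheory

open scoped MatrixOrder

section FunctionalCalculus

variable {n : Type*} [Fintype n] [DecidableEq n] {M : Matrix n n ℂ}

lemma mfun_ofReal_eq_cfc (hM : M.IsHermitian) (g : ℝ → ℝ) :
    mfun (fun x => (g x : ℂ)) M = cfc g M := by
  rw [mfun, dif_pos hM, hM.cfc_eq, IsHermitian.cfc, Unitary.conjStarAlgAut_apply]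
  rfl

lemma msqrt_eq_cfc (hM : M.IsHermitian) : msqrt M = cfc Real.sqrt M :=
  mfun_ofReal_eq_cfc hM _

lemma msqrt_posSemidef (hM : M.PosSemidef) : (msqrt M).PosSemidef := by
  rw [msqrt_eq_cfc hM.1, ← nonneg_iff_posSemidef]
  exact cfc_nonneg fun x _ => Real.sqrt_nonneg x

lemma msqrt_mul_self (hM : M.PosSemidef) : msqrt M * msqrt M = M := by
  have hspec : ∀ x ∈ spectrum ℝ M, 0 ≤ x :=
    fun x hx => spectrum_nonneg_of_nonneg (nonneg_iff_posSemidef.mpr hM) hx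
  rw [msqrt_eq_cfc hM.1, ← cfc_mul _ _ M, cfc_congr fun x hx => Real.mul_self_sqrt (hspec x hx),
    cfc_id' ℝ M]

lemma Matrix.IsHermitian.trace_mul_cfc (hM : M.IsHermitian) (g : ℝ → ℝ) (X : Matrix n n ℂ) :
    (X * cfc g M).trace = ∑ i, (star (hM.eigenvectorUnitary : Matrix n n ℂ) * X *
      hM.eigenvectorUnitary) i i * g (hM.eigenvalues i) := by
  rw [hM.cfc_eq, IsHermitian.cfc, Unitary.conjStarAlgAut_apply, ← Matrix.mul_assoc,
    ← Matrix.mul_assoc, Matrix.trace_mul_comm, ← Matrix.mul_assoc, ← Matrix.mul_assoc]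
  simp [Matrix.trace, Matrix.mul_diagonal]

lemma Matrix.IsHermitian.trace_cfc (hM : M.IsHermitian) (g : ℝ → ℝ) :
    (cfc g M).trace = ∑ i, (g (hM.eigenvalues i) : ℂ) := by
  simpa using hM.trace_mul_cfc g 1

end FunctionalCalculus

section TraceNorm

variable {n : Type*} [Fintype n] [DecidableEq n] {M : Matrix n n ℂ}

lemma Matrix.IsHermitian.trNorm_eq_sum_abs_eigenvalues (hM : M.IsHermitian) :
    trNorm M = ∑ i, |hM.eigenvalues i| := by
  have hMM : (Mᴴ * M).IsHermitian := (posSemidef_conjTranspose_mul_self M).1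
  have hsq : Mᴴ * M = cfc (fun x : ℝ => x * x) M := by
    rw [hM.eq, cfc_mul _ _ M, cfc_id' ℝ M]
  have habs : cfc Real.sqrt (Mᴴ * M) = cfc (fun x : ℝ => |x|) M := by
    rw [hsq, ← cfc_comp' Real.sqrt (fun x : ℝ => x * x) M]
    exact cfc_congr fun x _ => Real.sqrt_mul_self_eq_abs x
  calc trNorm M = ((cfc Real.sqrt (Mᴴ * M)).trace).re := by
        simp [hMM.trace_cfc, trNorm, singVals]
    _ = ∑ i, |hM.eigenvalues i| := by simp [habs, hM.trace_cfc]

lemma Matrix.PosSemidef.trNorm_eq_re_trace (hM : M.PosSemidef) : trNorm M = M.trace.re := by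
  simp [hM.1.trNorm_eq_sum_abs_eigenvalues, hM.1.trace_eq_sum_eigenvalues,
    abs_of_nonneg (hM.eigenvalues_nonneg _)]

lemma Matrix.IsHermitian.re_trace_mul_le_trNorm (hM : M.IsHermitian) {W : Matrix n n ℂ}
    (hW : W ∈ unitaryGroup n ℂ) : ((W * M).trace).re ≤ trNorm M := by
  set V := hM.eigenvectorUnitary
  have hdiag : ∀ i, ‖(star (V : Matrix n n ℂ) * W * V) i i‖ ≤ 1 := fun i =>
    entry_norm_bound_of_unitary (mul_mem (mul_mem (Unitary.star_mem V.2) hW) V.2) i i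
  rw [hM.trNorm_eq_sum_abs_eigenvalues, show W * M = W * cfc id M by rw [cfc_id ℝ M],
    hM.trace_mul_cfc, Complex.re_sum]
  gcongr with i
  calc ((star (V : Matrix n n ℂ) * W * V) i i * (hM.eigenvalues i : ℂ)).re
      ≤ ‖(star (V : Matrix n n ℂ) * W * V) i i‖ * |hM.eigenvalues i| := by
        rw [Complex.re_mul_ofReal]
        exact (le_abs_self _).trans
          ((abs_mul _ _).trans_le (by gcongr; exact Complex.abs_re_le_norm _))
    _ ≤ |hM.eigenvalues i| := mul_le_of_le_one_left (abs_nonneg _) (hdiag i)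

end TraceNorm

section OperatorNorm

variable {m n : Type*} [Fintype m] [Fintype n] [DecidableEq n]

lemma opNorm_nonneg (a : Matrix m n ℂ) : 0 ≤ opNorm a :=
  Real.iSup_nonneg fun _ => Real.sqrt_nonneg _

lemma eigenvalues_conjTranspose_mul_self_le_opNorm_sq (a : Matrix m n ℂ) (i : n) :
    (posSemidef_conjTranspose_mul_self a).1.eigenvalues i ≤ opNorm a ^ 2 := by
  have hsing : singVals a i ≤ opNorm a := le_ciSup (Set.finite_range _).bddAbove i
  calc (posSemidef_conjTranspose_mul_self a).1.eigenvalues i = singVals a i ^ 2 :=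
        (Real.sq_sqrt ((posSemidef_conjTranspose_mul_self a).eigenvalues_nonneg i)).symm
    _ ≤ opNorm a ^ 2 := by gcongr; exact Real.sqrt_nonneg _

lemma conjTranspose_mul_self_le_opNorm_sq (a : Matrix m n ℂ) :
    aᴴ * a ≤ algebraMap ℝ (Matrix n n ℂ) (opNorm a ^ 2) := by
  have hH := (posSemidef_conjTranspose_mul_self a).1
  refine le_algebraMap_of_spectrum_le fun x hx => ?_
  obtain ⟨i, rfl⟩ := hH.spectrum_real_eq_range_eigenvalues ▸ hx
  exact eigenvalues_conjTranspose_mul_self_le_opNorm_sq a i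

lemma re_trace_conjTranspose_mul_mul_le (a : Matrix m n ℂ) (B : Matrix n n ℂ) :
    (((a * B)ᴴ * (a * B)).trace).re ≤ opNorm a ^ 2 * ((Bᴴ * B).trace).re := by
  have hle : (a * B)ᴴ * (a * B) ≤ (opNorm a ^ 2) • (Bᴴ * B) := by
    have := star_left_conjugate_le_conjugate (conjTranspose_mul_self_le_opNorm_sq a) B
    rw [Algebra.algebraMap_eq_smul_one, mul_smul_comm, Matrix.mul_one, smul_mul_assoc] at this
    simpa only [conjTranspose_mul, star_eq_conjTranspose, Matrix.mul_assoc] using this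
  have htr := (Complex.le_def.mp (OrderHomClass.mono (tracePositiveLinearMap n ℝ ℂ) hle)).1
  rwa [tracePositiveLinearMap_apply, tracePositiveLinearMap_apply, trace_smul, Complex.smul_re,
    smul_eq_mul] at htr

end OperatorNorm

section CauchySchwarz

variable {m n : Type*} [Fintype m] [Fintype n]

lemma re_trace_conjTranspose_mul_self (X : Matrix m n ℂ) :
    ((Xᴴ * X).trace).re = ∑ i, ∑ j, ‖X i j‖ ^ 2 := by
  rw [trace, Complex.re_sum, Finset.sum_comm]
  refine Finset.sum_congr rfl fun j _ => ?_
  simp [mul_apply, Complex.re_sum, ← Complex.normSq_eq_norm_sq, Complex.normSq_apply]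

lemma norm_trace_mul_le (X : Matrix m n ℂ) (Y : Matrix n m ℂ) :
    ‖(X * Y).trace‖ ≤ √((Xᴴ * X).trace.re) * √((Yᴴ * Y).trace.re) := by
  calc ‖(X * Y).trace‖ = ‖∑ p : m × n, X p.1 p.2 * Y p.2 p.1‖ := by
        simp [trace, mul_apply, Fintype.sum_prod_type]
    _ ≤ ∑ p : m × n, ‖X p.1 p.2‖ * ‖Y p.2 p.1‖ :=
        (norm_sum_le _ _).trans_eq (by simp only [norm_mul])
    _ ≤ √(∑ p : m × n, ‖X p.1 p.2‖ ^ 2) * √(∑ p : m × n, ‖Y p.2 p.1‖ ^ 2) :=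
        Real.sum_mul_le_sqrt_mul_sqrt _ _ _
    _ = √((Xᴴ * X).trace.re) * √((Yᴴ * Y).trace.re) := by
        rw [re_trace_conjTranspose_mul_self, re_trace_conjTranspose_mul_self,
          Fintype.sum_prod_type, Fintype.sum_prod_type]
        congr 2
        exact Finset.sum_comm

end CauchySchwarz

section PowersStormer

variable {n : Type*} [Fintype n] [DecidableEq n]

-- Unlike `Real.sign`, this is `1` at `0`, which makes `cfc unitSign C` unitary.
noncomputable def unitSign (x : ℝ) : ℝ := if x < 0 then -1 else 1

lemma unitSign_mul_self (x : ℝ) : unitSign x * unitSign x = 1 := by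
  unfold unitSign; split_ifs <;> norm_num

lemma unitSign_mul_self_eq_abs (x : ℝ) : unitSign x * x = |x| := by
  unfold unitSign; split_ifs with hx
  · rw [abs_of_neg hx]; ring
  · rw [abs_of_nonneg (not_lt.mp hx), one_mul]

lemma cfc_unitSign_mem_unitaryGroup {C : Matrix n n ℂ} (hC : C.IsHermitian) :
    cfc unitSign C ∈ unitaryGroup n ℂ := by
  have hcont : ContinuousOn unitSign (spectrum ℝ C) := C.finite_real_spectrum.continuousOn _
  rw [mem_unitaryGroup_iff, (cfc_predicate unitSign C).star_eq, ← cfc_mul _ _ C,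
    cfc_congr fun x _ => unitSign_mul_self x, cfc_const_one ℝ C]

lemma re_trace_mul_self_le_re_trace_mul_cfc_abs {C D : Matrix n n ℂ} (hC : C.IsHermitian)
    (hDC : (D + C).PosSemidef) (hDC' : (D - C).PosSemidef) :
    ((C * C).trace).re ≤ ((D * cfc (fun x : ℝ => |x|) C).trace).re := by
  set U := (hC.eigenvectorUnitary : Matrix n n ℂ)
  have hCdiag : star U * C * U = diagonal (fun i => (hC.eigenvalues i : ℂ)) := by
    simpa [Unitary.conjStarAlgAut_apply, Function.comp_def] using
      hC.conjStarAlgAut_star_eigenvectorUnitary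
  -- In the eigenbasis of `C`, the diagonal entries of `D ± C ≥ 0` are `d_i ± λ_i ≥ 0`.
  have hdiag : ∀ i, |hC.eigenvalues i| ≤ ((star U * D * U) i i).re := by
    intro i
    have hconj : ∀ {P : Matrix n n ℂ}, P.PosSemidef → 0 ≤ ((star U * P * U) i i).re :=
      fun hP => (Complex.le_def.mp ((hP.conjTranspose_mul_mul_same U).diag_nonneg)).1
    have hplus := hconj hDC
    have hminus := hconj hDC'
    simp only [Matrix.mul_add, Matrix.add_mul, Matrix.mul_sub, Matrix.sub_mul, hCdiag,
      Matrix.add_apply, Matrix.sub_apply, diagonal_apply_eq, Complex.add_re, Complex.sub_re,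
      Complex.ofReal_re] at hplus hminus
    exact abs_le.mpr ⟨by linarith, by linarith⟩
  have hCC : C * C = cfc (fun x : ℝ => x * x) C := by rw [cfc_mul _ _ C, cfc_id' ℝ C]
  rw [hCC, hC.trace_cfc, hC.trace_mul_cfc, Complex.re_sum, Complex.re_sum]
  refine Finset.sum_le_sum fun i _ => ?_
  rw [Complex.ofReal_re, Complex.re_mul_ofReal, ← abs_mul_abs_self]
  exact mul_le_mul_of_nonneg_right (hdiag i) (abs_nonneg _)

lemma re_trace_sub_mul_sub_le_trNorm {A B : Matrix n n ℂ} (hA : A.PosSemidef)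
    (hB : B.PosSemidef) :
    (((B - A) * (B - A)).trace).re ≤ trNorm (B * B - A * A) := by
  set C := B - A
  set D := B + A
  have hC : C.IsHermitian := hB.1.sub hA.1
  have hcont : ContinuousOn unitSign (spectrum ℝ C) := C.finite_real_spectrum.continuousOn _
  set S := cfc unitSign C
  have hSC : S * C = cfc (fun x : ℝ => |x|) C := by
    rw [show S * C = S * cfc id C by rw [cfc_id ℝ C], ← cfc_mul _ _ C]
    exact cfc_congr fun x _ => unitSign_mul_self_eq_abs x
  have hCS : C * S = cfc (fun x : ℝ => |x|) C := by
    rw [show C * S = cfc id C * S by rw [cfc_id ℝ C], ← cfc_mul _ _ C]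
    exact cfc_congr fun x _ => (mul_comm _ _).trans (unitSign_mul_self_eq_abs x)
  have hsum : (2 : ℂ) • (B * B - A * A) = C * D + D * C := by
    simp only [C, D, two_smul]; noncomm_ring
  have htr : (S * (B * B - A * A)).trace = (D * cfc (fun x : ℝ => |x|) C).trace := by
    have hCD : (S * (C * D)).trace = (D * cfc (fun x : ℝ => |x|) C).trace := by
      rw [← Matrix.mul_assoc, hSC, trace_mul_comm]
    have hDC : (S * (D * C)).trace = (D * cfc (fun x : ℝ => |x|) C).trace := by
      rw [← Matrix.mul_assoc, Matrix.trace_mul_cycle, hCS, trace_mul_comm]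
    refine mul_left_cancel₀ (two_ne_zero (α := ℂ)) ?_
    rw [← smul_eq_mul, ← trace_smul, ← Matrix.mul_smul, hsum, Matrix.mul_add, trace_add, hCD, hDC,
      two_mul]
  have hM : (B * B - A * A).IsHermitian := by
    simpa only [sq] using (hB.1.pow 2).sub (hA.1.pow 2)
  calc (((B - A) * (B - A)).trace).re ≤ ((D * cfc (fun x : ℝ => |x|) C).trace).re :=
        re_trace_mul_self_le_re_trace_mul_cfc_abs hC
          (by convert hB.add hB using 1; simp only [D]; abel)
          (by convert hA.add hA using 1; simp only [D]; abel)
    _ = ((S * (B * B - A * A)).trace).re := by rw [htr]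
    _ ≤ trNorm (B * B - A * A) := hM.re_trace_mul_le_trNorm (cfc_unitSign_mem_unitaryGroup hC)

end PowersStormer

/-- Cauchy–Schwarz / Powers–Størmer estimate. -/
theorem cauchy_schwarz_powers_stormer {n : ℕ}
    (σ σ' a₁ a₂ : Matrix (Fin n) (Fin n) ℂ)
    (hσ : σ.PosSemidef) (hσ' : σ'.PosSemidef) :
    ‖(a₂ * msqrt σ' * a₁ * (msqrt σ' - msqrt σ)).trace‖ ≤
      opNorm a₂ * opNorm a₁ * trNorm σ' ^ ((1 : ℝ) / 2) *
        trNorm (σ' - σ) ^ ((1 : ℝ) / 2) := by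
  set C := msqrt σ' - msqrt σ
  have hB := msqrt_posSemidef hσ'
  have hC : C.IsHermitian := hB.1.sub (msqrt_posSemidef hσ).1
  have hX : (((a₂ * msqrt σ')ᴴ * (a₂ * msqrt σ')).trace).re ≤ opNorm a₂ ^ 2 * trNorm σ' := by
    simpa [hB.1.eq, msqrt_mul_self hσ', hσ'.trNorm_eq_re_trace] using
      re_trace_conjTranspose_mul_mul_le a₂ (msqrt σ')
  have hY : (((a₁ * C)ᴴ * (a₁ * C)).trace).re ≤ opNorm a₁ ^ 2 * trNorm (σ' - σ) := by
    refine (re_trace_conjTranspose_mul_mul_le a₁ C).trans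
      (mul_le_mul_of_nonneg_left ?_ (sq_nonneg _))
    simpa [hC.eq, msqrt_mul_self hσ', msqrt_mul_self hσ] using
      re_trace_sub_mul_sub_le_trNorm (msqrt_posSemidef hσ) hB
  calc ‖(a₂ * msqrt σ' * a₁ * C).trace‖ = ‖((a₂ * msqrt σ') * (a₁ * C)).trace‖ := by
        simp only [Matrix.mul_assoc]
    _ ≤ √(opNorm a₂ ^ 2 * trNorm σ') * √(opNorm a₁ ^ 2 * trNorm (σ' - σ)) :=
        (norm_trace_mul_le _ _).trans (by gcongr)
    _ = opNorm a₂ * opNorm a₁ * trNorm σ' ^ ((1 : ℝ) / 2) * trNorm (σ' - σ) ^ ((1 : ℝ) / 2) := by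
        rw [Real.sqrt_mul (sq_nonneg _), Real.sqrt_mul (sq_nonneg _),
          Real.sqrt_sq (opNorm_nonneg a₂), Real.sqrt_sq (opNorm_nonneg a₁),
          Real.sqrt_eq_rpow, Real.sqrt_eq_rpow]
        ring
end
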